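/- arXiv:2003.03953 — 4 statements merged into one kernel-verified Lean document; each statement's English description precedes it below -/
import Mathlib

section
/- Let R be a nonzero commutative Noetherian ring and n a positive integer. Then ir(R) = ir(R[x_1, …, x_n]) = ir(R[[x_1, …, x_n]]), where R[x_1, …, x_n] is the polynomial ring and R[[x_1, …, x_n]] is the formal power series ring in n variables over R. -/
/-- A submodule `N` of `M` is irreducible if it is proper and cannot be written as the
intersection of two submodules strictly containing it. -/
def IsIrredSubmodule (R M : Type*) [CommRing R] [AddCommGroup M] [Module R M]
    (N : Submodule R M) : Prop :=
  N ≠ ⊤ ∧ ∀ N₁ N₂ : Submodule R M, N₁ ⊓ N₂ = N → N₁ = N ∨ N₂ = N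

open Classical in
/-- The reducibility index `ir_R(M)`: the number of components in an irredundant
decomposition of the zero submodule of `M` as an intersection of irreducible submodules. -/
noncomputable def irIndex (R M : Type*) [CommRing R] [AddCommGroup M] [Module R M] : ℕ :=
  sInf {n | ∃ T : Finset (Submodule R M), T.card = n ∧ (∀ N ∈ T, IsIrredSubmodule R M N) ∧
    T.inf id = ⊥ ∧ ∀ N ∈ T, (T.erase N).inf id ≠ ⊥}

/-!
In a modular lattice all irredundant decompositions of `⊥` into `⊓`-irreducible elements have the
same length (Noether). Omitting one component at a time turns such a decomposition into an
independent family of nonzero elements, and an independent family is never longer than an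
irreducible decomposition: an element meeting an irreducible `q` trivially is uniform, so it meets
trivially the join of all but one member of the family, which removes one component and one member.

Hence `ir(R)` is the length of any irredundant decomposition `0 = q₁ ∩ ⋯ ∩ qₜ`, and it suffices
that the coefficientwise extensions `qᵢ[x]` (resp. `qᵢ[[x]]`) again form one. Everything is formal
except the irreducibility of `q[x]`. In `S = R/q` the ideal `0` is primary, with nilpotent prime
radical `p`; any nonzero `F` has a nonzero multiple `c F` killed by `p`, so with coefficients in
`Ann p`. This module has rank one over `S/p`: some `d ∉ p` maps all of it into `S w₀`. Then
`d F = w₀ F'` with `F' ∉ p[x]`, and two such elements have the common nonzero multiple `w₀ F' G'`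
because `p[x]` is prime.
-/

open Finset

section Lattice

variable {α : Type*} [Lattice α]

def IsUniform [OrderBot α] (k : α) : Prop :=
  ∀ ⦃a b⦄, a ≤ k → b ≤ k → a ⊓ b = ⊥ → a = ⊥ ∨ b = ⊥

/-- `T` is an irredundant decomposition of `⊥` into `⊓`-irreducible elements. -/
structure IsIrredDecomposition [BoundedOrder α] [DecidableEq α] (T : Finset α) : Prop where
  infIrred : ∀ a ∈ T, InfIrred a
  inf_eq_bot : T.inf id = ⊥
  erase_inf_ne_bot : ∀ a ∈ T, (T.erase a).inf id ≠ ⊥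

variable [BoundedOrder α]

theorem IsIrredDecomposition.supIndep [DecidableEq α] {T : Finset α}
    (hT : IsIrredDecomposition T) : T.SupIndep fun a ↦ (T.erase a).inf id := by
  intro t _ a ha hat
  have hle : t.sup (fun b ↦ (T.erase b).inf id) ≤ a :=
    Finset.sup_le fun b hb ↦ Finset.inf_le (mem_erase.mpr ⟨fun h ↦ hat (h ▸ hb), ha⟩)
  refine Disjoint.mono_right hle (disjoint_iff.mpr ?_)
  rw [← hT.inf_eq_bot, ← insert_erase ha, inf_insert, insert_erase ha, inf_comm, id]

theorem IsIrredDecomposition.image {β : Type*} [Lattice β] [BoundedOrder β] [DecidableEq α]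
    [DecidableEq β] {f : α → β} (hf : Function.Injective f)
    (hinf : ∀ a b, f (a ⊓ b) = f a ⊓ f b) (htop : f ⊤ = ⊤) (hbot : f ⊥ = ⊥) {T : Finset α}
    (hT : IsIrredDecomposition T) (hirr : ∀ a ∈ T, InfIrred (f a)) :
    IsIrredDecomposition (T.image f) := by
  have himage : ∀ s : Finset α, (s.image f).inf id = f (s.inf id) := fun s ↦ by
    rw [inf_image]
    exact (apply_inf_eq_inf_comp f hinf htop).symm
  refine ⟨by simpa using hirr, by rw [himage, hT.inf_eq_bot, hbot], ?_⟩
  simp only [mem_image, forall_exists_index, and_imp, forall_apply_eq_imp_iff₂]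
  intro a ha
  rw [← image_erase hf, himage, ← hbot, hf.ne_iff]
  exact hT.erase_inf_ne_bot a ha

variable [IsModularLattice α]

theorem InfIrred.isUniform_of_inf_eq_bot {q k : α} (hq : InfIrred q) (hk : k ⊓ q = ⊥) :
    IsUniform k := by
  intro a b ha hb hab
  have hkb : k ⊓ (q ⊔ b) = b := by
    rw [← inf_sup_assoc_of_le _ hb, hk, bot_sup_eq]
  have hq' : (q ⊔ a) ⊓ (q ⊔ b) = q := by
    rw [sup_inf_assoc_of_le _ le_sup_left, ← inf_eq_left.mpr ha, inf_assoc, hkb, hab, sup_bot_eq]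
  refine (hq.2 hq').imp (fun h ↦ ?_) fun h ↦ ?_
  · exact le_bot_iff.mp (hk ▸ le_inf ha (sup_eq_left.mp h))
  · exact le_bot_iff.mp (hk ▸ le_inf hb (sup_eq_left.mp h))

theorem IsUniform.exists_inf_sup_erase_eq_bot {ι : Type*} [DecidableEq ι] {k : α}
    (hk : IsUniform k) {g : ι → α} {s : Finset ι} (hs : s.Nonempty) (hg : s.SupIndep g) :
    ∃ i ∈ s, k ⊓ (s.erase i).sup g = ⊥ := by
  induction hs using Finset.Nonempty.cons_induction with
  | singleton a => exact ⟨a, mem_singleton_self a, by simp⟩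
  | cons a s ha hs ih =>
    by_cases hks : k ⊓ s.sup g = ⊥
    · exact ⟨a, mem_cons_self a s, by rwa [erase_cons]⟩
    obtain ⟨i, hi, hki⟩ := ih (hg.subset (subset_cons ha))
    refine ⟨i, mem_cons.mpr (Or.inr hi), ?_⟩
    rw [erase_cons_of_ne _ (ne_of_mem_of_not_mem hi ha).symm, sup_cons]
    have hga : g a ⊓ s.sup g = ⊥ :=
      (hg (subset_cons ha) (mem_cons_self a s) ha).eq_bot
    refine (hk inf_le_left inf_le_left (le_bot_iff.mp ?_)).resolve_right hks
    calc k ⊓ (g a ⊔ (s.erase i).sup g) ⊓ (k ⊓ s.sup g)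
        ≤ k ⊓ (((s.erase i).sup g ⊔ g a) ⊓ s.sup g) := by
          rw [sup_comm (g a)]
          exact le_inf (inf_le_left.trans inf_le_left) (inf_le_inf inf_le_right inf_le_right)
      _ = k ⊓ (s.erase i).sup g := by
          rw [sup_inf_assoc_of_le _ (Finset.sup_mono (erase_subset i s)), hga, sup_bot_eq]
      _ = ⊥ := hki

theorem card_le_card_of_supIndep [DecidableEq α] {ι : Type*} [DecidableEq ι] {T : Finset α}
    (hT : ∀ q ∈ T, InfIrred q) {s : Finset ι} {g : ι → α} (hg : s.SupIndep g)
    (hne : ∀ i ∈ s, g i ≠ ⊥) (h : T.inf id ⊓ s.sup g = ⊥) : s.card ≤ T.card := by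
  induction T using Finset.induction_on generalizing s with
  | empty =>
    rw [inf_empty, top_inf_eq, Finset.sup_eq_bot_iff] at h
    simp only [card_empty, nonpos_iff_eq_zero, card_eq_zero, eq_empty_iff_forall_notMem]
    exact fun i hi ↦ hne i hi (h i hi)
  | insert q T hqT ih =>
    obtain rfl | hs := s.eq_empty_or_nonempty
    · simp
    have hunif : IsUniform (T.inf id ⊓ s.sup g) :=
      (hT q (mem_insert_self q T)).isUniform_of_inf_eq_bot <| by
        rw [← h, inf_insert, id, inf_right_comm, inf_comm q]
    obtain ⟨i, hi, hki⟩ := hunif.exists_inf_sup_erase_eq_bot hs hg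
    rw [inf_assoc, inf_eq_right.mpr (Finset.sup_mono (f := g) (erase_subset i s))] at hki
    have hcard := ih (fun q hq ↦ hT q (mem_insert_of_mem hq)) (hg.subset (erase_subset i s))
      (fun j hj ↦ hne j (mem_of_mem_erase hj)) hki
    rw [card_insert_of_notMem hqT, ← card_erase_add_one hi]
    omega

theorem IsIrredDecomposition.card_le [DecidableEq α] {T T' : Finset α}
    (hT : IsIrredDecomposition T) (hT' : IsIrredDecomposition T') : T'.card ≤ T.card :=
  card_le_card_of_supIndep hT.infIrred hT'.supIndep hT'.erase_inf_ne_bot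
    (by rw [hT.inf_eq_bot, bot_inf_eq])

end Lattice

theorem Submodule.exists_isIrredDecomposition {R M : Type*} [CommRing R] [AddCommGroup M]
    [Module R M] [IsNoetherian R M] :
    ∃ T : Finset (Submodule R M), IsIrredDecomposition T := by
  obtain ⟨s, hs, hirr⟩ := exists_infIrred_decomposition (⊥ : Submodule R M)
  obtain ⟨t, hts, ht, hmin⟩ := Submodule.decomposition_erase_inf hs
  exact ⟨t, fun a ha ↦ hirr (hts ha), ht, fun a ha h ↦ hmin ha (h.trans_le bot_le)⟩

theorem isIrredSubmodule_iff_infIrred {R M : Type*} [CommRing R] [AddCommGroup M] [Module R M]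
    {N : Submodule R M} : IsIrredSubmodule R M N ↔ InfIrred N := by
  rw [IsIrredSubmodule, InfIrred, isMax_iff_eq_top]

theorem irIndex_eq_card {R M : Type*} [CommRing R] [AddCommGroup M] [Module R M]
    {T : Finset (Submodule R M)} (hT : IsIrredDecomposition T) : irIndex R M = T.card := by
  simp only [irIndex, isIrredSubmodule_iff_infIrred]
  refine le_antisymm (Nat.sInf_le ⟨T, rfl, hT.1, hT.2, hT.3⟩)
    (le_csInf ⟨_, T, rfl, hT.1, hT.2, hT.3⟩ ?_)
  rintro n ⟨T', rfl, h₁, h₂, h₃⟩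
  exact IsIrredDecomposition.card_le ⟨h₁, h₂, h₃⟩ hT

theorem Ideal.infIrred_comap_iff_of_surjective {A B : Type*} [CommRing A] [CommRing B]
    {f : A →+* B} (hf : Function.Surjective f) {I : Ideal B} :
    InfIrred (I.comap f) ↔ InfIrred I := by
  have hinj := Ideal.comap_injective_of_surjective f hf
  simp only [InfIrred, isMax_iff_eq_top, ← Ideal.comap_top (f := f), hinj.ne_iff]
  refine and_congr_right fun _ ↦ ⟨fun h J₁ J₂ hJ ↦ ?_, fun h K₁ K₂ hK ↦ ?_⟩
  · exact (h (by rw [← Ideal.comap_inf, hJ])).imp (hinj ·) (hinj ·)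
  · have hle : ∀ K, Ideal.comap f I ≤ K → Ideal.comap f (K.map f) = K := fun K hK ↦ by
      rw [Ideal.comap_map_of_surjective' f hf, sup_eq_left]
      exact (Ideal.comap_mono bot_le).trans hK
    have h₁ := hle K₁ (hK ▸ inf_le_left)
    have h₂ := hle K₂ (hK ▸ inf_le_right)
    have hmap : K₁.map f ⊓ K₂.map f = I := hinj (by rw [Ideal.comap_inf, h₁, h₂, hK])
    exact (h hmap).imp (fun h ↦ by rw [← h₁, h]) fun h ↦ by rw [← h₂, h]

theorem Ideal.infIrred_bot_quotient_iff {R : Type*} [CommRing R] {q : Ideal R} :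
    InfIrred (⊥ : Ideal (R ⧸ q)) ↔ InfIrred q := by
  rw [← Ideal.infIrred_comap_iff_of_surjective Ideal.Quotient.mk_surjective,
    ← RingHom.ker_eq_comap_bot, Ideal.mk_ker]

theorem Ideal.infIrred_bot_iff {B : Type*} [CommRing B] :
    InfIrred (⊥ : Ideal B) ↔
      Nontrivial B ∧ ∀ a b : B, a ≠ 0 → b ≠ 0 → ∃ r s, r * a = s * b ∧ r * a ≠ 0 := by
  have hspan : ∀ a b : B, (∃ r s, r * a = s * b ∧ r * a ≠ 0) ↔
      Ideal.span {a} ⊓ Ideal.span {b} ≠ ⊥ := fun a b ↦ by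
    simp only [Submodule.ne_bot_iff, Submodule.mem_inf, Ideal.mem_span_singleton']
    constructor
    · rintro ⟨r, s, hrs, hr⟩
      exact ⟨r * a, ⟨⟨r, rfl⟩, s, hrs.symm⟩, hr⟩
    · rintro ⟨x, ⟨⟨r, rfl⟩, s, hs⟩, hx⟩
      exact ⟨r, s, hs.symm, hx⟩
  have hnt : ¬(⊥ : Ideal B) = ⊤ ↔ Nontrivial B := by
    rw [subsingleton_iff_bot_eq_top, Submodule.subsingleton_iff, not_subsingleton_iff_nontrivial]
  simp only [InfIrred, isMax_iff_eq_top, hnt, hspan]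
  refine and_congr_right fun _ ↦ ⟨fun h a b ha hb hab ↦ ?_, fun h I J hIJ ↦ ?_⟩
  · rcases h hab with h | h <;> simp_all
  · by_contra! hne
    obtain ⟨a, ha, ha0⟩ := Submodule.exists_mem_ne_zero_of_ne_bot hne.1
    obtain ⟨b, hb, hb0⟩ := Submodule.exists_mem_ne_zero_of_ne_bot hne.2
    refine h a b ha0 hb0 (le_bot_iff.mp (hIJ ▸ inf_le_inf ?_ ?_)) <;>
      simpa [Ideal.span_singleton_le_iff_mem]

theorem exists_smul_ne_zero_of_isNilpotent {R M : Type*} [CommRing R] [AddCommGroup M]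
    [Module R M] {I : Ideal R} (hI : IsNilpotent I) {x : M} (hx : x ≠ 0) :
    ∃ c : R, c • x ≠ 0 ∧ ∀ r ∈ I, r • c • x = 0 := by
  classical
  obtain ⟨k, hk⟩ := hI
  have hex : ∃ j, ∀ c ∈ I ^ j, c • x = 0 := ⟨k, fun c hc ↦ by simp_all⟩
  obtain ⟨j, hj⟩ : ∃ j, Nat.find hex = j + 1 :=
    Nat.exists_eq_succ_of_ne_zero fun h ↦ hx (by simpa using Nat.find_spec hex 1 (by simp [h]))
  obtain ⟨c, hc, hcx⟩ : ∃ c ∈ I ^ j, c • x ≠ 0 := by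
    simpa using Nat.find_min hex (m := j) (by omega)
  refine ⟨c, hcx, fun r hr ↦ ?_⟩
  rw [smul_smul]
  exact Nat.find_spec hex (r * c) (hj ▸ pow_succ' I j ▸ Ideal.mul_mem_mul hr hc)

theorem exists_notMem_nilradical_forall_mul_mem_span {S : Type*} [CommRing S] [IsNoetherianRing S]
    (hS : InfIrred (⊥ : Ideal S)) {w₀ : S} (hw₀ : w₀ ≠ 0) :
    ∃ d ∉ nilradical S, ∀ w ∈ (nilradical S).annihilator, d * w ∈ Ideal.span {w₀} := by
  have hp : (nilradical S).IsPrime := Ideal.isPrime_radical hS.isPrimary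
  obtain ⟨-, hunif⟩ := Ideal.infIrred_bot_iff.mp hS
  set W := (nilradical S).annihilator
  set N : Submodule S W := Submodule.comap W.subtype (Ideal.span {w₀})
  have hmk : ∀ (r : S) (w : W), r • Submodule.Quotient.mk (p := N) w = 0 ↔
      r * w ∈ Ideal.span {w₀} := fun r w ↦ by
    rw [← Submodule.Quotient.mk_smul, Submodule.Quotient.mk_eq_zero]
    rfl
  -- `W ⧸ N` is finite and vanishes at the prime `nilradical S`, so its annihilator is not in it.
  have hQ : ⟨nilradical S, hp⟩ ∉ Module.support S (W ⧸ N) := by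
    rw [Module.notMem_support_iff']
    intro x
    obtain ⟨⟨w, hw⟩, rfl⟩ := Submodule.Quotient.mk_surjective _ x
    simp only [hmk]
    by_cases hw0 : w = 0
    · exact ⟨1, (Ideal.ne_top_iff_one _).mp hp.ne_top, by simp [hw0]⟩
    obtain ⟨r, s, hrs, hr⟩ := hunif w w₀ hw0 hw₀
    refine ⟨r, fun hrp ↦ hr ?_, Ideal.mem_span_singleton'.mpr ⟨s, hrs.symm⟩⟩
    rw [mul_comm]
    exact Submodule.mem_annihilator.mp hw r hrp
  obtain ⟨d, hd, hdp⟩ := SetLike.not_le_iff_exists.mp (Module.mem_support_iff_of_finite.not.mp hQ)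
  exact ⟨d, hdp, fun w hw ↦ (hmk d ⟨w, hw⟩).mp (Module.mem_annihilator.mp hd _)⟩

section Coefficients

/-! `B` stands for `S[x]` or `S[[x]]`, seen through its `S`-linear coefficient maps `coeff i`. -/

variable {S B ι : Type*} [CommRing S] [CommRing B] [Algebra S B]

theorem exists_mul_eq_mul_ne_zero_of_nilradical_smul_eq_zero [IsNoetherianRing S]
    (hS : InfIrred (⊥ : Ideal S)) (coeff : ι → B →ₗ[S] S)
    (hext : ∀ F, (∀ i, coeff i F = 0) → F = 0)
    (hprime : ∀ F G : B, (∀ i, coeff i (F * G) ∈ nilradical S) →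
      (∀ i, coeff i F ∈ nilradical S) ∨ ∀ i, coeff i G ∈ nilradical S)
    (hdvd : ∀ (w : S) (F : B), (∀ i, coeff i F ∈ Ideal.span {w}) → ∃ F', F = w • F')
    {F G : B} (hF : F ≠ 0) (hG : G ≠ 0) (hFp : ∀ r ∈ nilradical S, r • F = 0)
    (hGp : ∀ r ∈ nilradical S, r • G = 0) :
    ∃ P Q : B, P * F = Q * G ∧ P * F ≠ 0 := by
  set p := nilradical S
  have hzd : ∀ {x y : S}, x * y = 0 → x = 0 ∨ y ∈ p := fun h ↦
    ((Ideal.isPrimary_iff.mp hS.isPrimary).2 (by simpa using h)).imp_left (Submodule.mem_bot _).mp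
  have hcoeff : ∀ (c : S) (F : B) i, coeff i (c • F) = c * coeff i F := fun c F i ↦ by
    rw [map_smul, smul_eq_mul]
  have hann : ∀ F : B, (∀ r ∈ p, r • F = 0) → ∀ i, coeff i F ∈ p.annihilator := fun F hF i ↦
    Submodule.mem_annihilator.mpr fun r hr ↦ by
      rw [smul_eq_mul, mul_comm, ← hcoeff, hF r hr, map_zero]
  have hsmul_ne : ∀ d ∉ p, ∀ F : B, F ≠ 0 → d • F ≠ 0 := fun d hd F hF hdF ↦ hF <|
    hext F fun i ↦ (hzd (by rw [mul_comm, ← hcoeff, hdF, map_zero])).resolve_right hd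
  obtain ⟨i₀, hi₀⟩ : ∃ i, coeff i F ≠ 0 := by
    by_contra! h
    exact hF (hext F h)
  set w₀ := coeff i₀ F
  have hw₀ : ∀ H : B, w₀ • H = 0 ↔ ∀ i, coeff i H ∈ p := fun H ↦
    ⟨fun h i ↦ (hzd (by rw [← hcoeff, h, map_zero])).resolve_left hi₀,
      fun h ↦ hext _ fun i ↦ by
        rw [hcoeff, ← smul_eq_mul]
        exact Submodule.mem_annihilator.mp (hann F hFp i₀) _ (h i)⟩
  obtain ⟨d, hdp, hd⟩ := exists_notMem_nilradical_forall_mul_mem_span hS hi₀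
  obtain ⟨F', hF'⟩ := hdvd w₀ (d • F) fun i ↦ hcoeff d F i ▸ hd _ (hann F hFp i)
  obtain ⟨G', hG'⟩ := hdvd w₀ (d • G) fun i ↦ hcoeff d G i ▸ hd _ (hann G hGp i)
  have hGF : (d • G') * F = w₀ • (F' * G') := by
    rw [smul_mul_assoc, ← mul_smul_comm, hF', mul_smul_comm, mul_comm]
  have hFG : (d • F') * G = w₀ • (F' * G') := by
    rw [smul_mul_assoc, ← mul_smul_comm, hG', mul_smul_comm]
  refine ⟨d • G', d • F', hGF.trans hFG.symm, hGF ▸ fun h ↦ ?_⟩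
  rcases hprime F' G' ((hw₀ _).mp h) with h' | h'
  · exact hsmul_ne d hdp F hF (hF' ▸ (hw₀ F').mpr h')
  · exact hsmul_ne d hdp G hG (hG' ▸ (hw₀ G').mpr h')

theorem infIrred_bot_of_coeff [IsNoetherianRing S] [Nontrivial B] (hS : InfIrred (⊥ : Ideal S))
    (coeff : ι → B →ₗ[S] S) (hext : ∀ F, (∀ i, coeff i F = 0) → F = 0)
    (hprime : ∀ F G : B, (∀ i, coeff i (F * G) ∈ nilradical S) →
      (∀ i, coeff i F ∈ nilradical S) ∨ ∀ i, coeff i G ∈ nilradical S)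
    (hdvd : ∀ (w : S) (F : B), (∀ i, coeff i F ∈ Ideal.span {w}) → ∃ F', F = w • F') :
    InfIrred (⊥ : Ideal B) := by
  refine Ideal.infIrred_bot_iff.mpr ⟨‹_›, fun F G hF hG ↦ ?_⟩
  have hnil := IsNoetherianRing.isNilpotent_nilradical S
  obtain ⟨c, hcF, hcFp⟩ := exists_smul_ne_zero_of_isNilpotent hnil hF
  obtain ⟨c', hcG, hcGp⟩ := exists_smul_ne_zero_of_isNilpotent hnil hG
  obtain ⟨P, Q, hPQ, hP⟩ :=
    exists_mul_eq_mul_ne_zero_of_nilradical_smul_eq_zero hS coeff hext hprime hdvd hcF hcG hcFp hcGp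
  refine ⟨c • P, c' • Q, ?_, ?_⟩
  · simpa [smul_mul_assoc, mul_smul_comm] using hPQ
  · simpa [smul_mul_assoc, mul_smul_comm] using hP

theorem irIndex_eq_of_coeff [IsNoetherianRing S] (coeff : ι → B →ₗ[S] S)
    (hext : ∀ F, (∀ i, coeff i F = 0) → F = 0) {i₀ : ι} (hone : coeff i₀ 1 = 1)
    (E : Ideal S → Ideal B) (hE : ∀ I F, F ∈ E I ↔ ∀ i, coeff i F ∈ I)
    (hirr : ∀ q, InfIrred q → InfIrred (E q)) : irIndex S S = irIndex B B := by
  have hinj : Function.Injective E := fun I J h ↦ by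
    have hC : ∀ (I : Ideal S) x, algebraMap S B x ∈ E I ↔ x ∈ I := fun I x ↦ by
      simp only [hE, Algebra.algebraMap_eq_smul_one, map_smul, smul_eq_mul]
      exact ⟨fun h ↦ by simpa [hone] using h i₀, fun h i ↦ I.mul_mem_right _ h⟩
    ext x
    rw [← hC, h, hC]
  obtain ⟨T, hT⟩ := Submodule.exists_isIrredDecomposition (R := S) (M := S)
  have hET := hT.image hinj (fun I J ↦ by ext; simp [hE, forall_and]) (by ext; simp [hE])
    (by ext F; simpa [hE] using ⟨hext F, fun h i ↦ h ▸ map_zero _⟩)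
    (fun q hq ↦ hirr q (hT.infIrred q hq))
  rw [irIndex_eq_card hT, irIndex_eq_card hET, card_image_of_injective _ hinj]

end Coefficients

namespace MvPolynomial

variable {σ S : Type*} [CommRing S]

theorem mem_ker_map_quotientMk {I : Ideal S} {F : MvPolynomial σ S} :
    F ∈ RingHom.ker (map (Ideal.Quotient.mk I)) ↔ ∀ m, coeff m F ∈ I := by
  rw [ker_map, Ideal.mk_ker, mem_map_C_iff]

theorem exists_eq_smul_of_coeff_mem_span {w : S} {F : MvPolynomial σ S}
    (h : ∀ m, coeff m F ∈ Ideal.span {w}) : ∃ F', F = w • F' := by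
  rw [← mem_map_C_iff, Ideal.map_span, Set.image_singleton, Ideal.mem_span_singleton'] at h
  obtain ⟨F', rfl⟩ := h
  exact ⟨F', by rw [smul_eq_C_mul, mul_comm]⟩

theorem infIrred_bot [IsNoetherianRing S] (hS : InfIrred (⊥ : Ideal S)) :
    InfIrred (⊥ : Ideal (MvPolynomial σ S)) := by
  have : Nontrivial S := (Ideal.infIrred_bot_iff.mp hS).1
  have : (nilradical S).IsPrime := Ideal.isPrime_radical hS.isPrimary
  refine infIrred_bot_of_coeff hS (fun m ↦ lcoeff S m) (fun F h ↦ ext _ _ h) (fun F G h ↦ ?_)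
    fun w F h ↦ exists_eq_smul_of_coeff_mem_span h
  simp only [lcoeff_apply, ← mem_ker_map_quotientMk, RingHom.mem_ker, map_mul, mul_eq_zero] at h ⊢
  exact h

theorem irIndex_eq [IsNoetherianRing S] :
    irIndex S S = irIndex (MvPolynomial σ S) (MvPolynomial σ S) :=
  irIndex_eq_of_coeff (fun m ↦ lcoeff S m) (fun F h ↦ ext _ _ h) (i₀ := 0) (by simp)
    (fun I ↦ RingHom.ker (map (Ideal.Quotient.mk I))) (fun _ _ ↦ mem_ker_map_quotientMk)
    fun q hq ↦ by
      rw [RingHom.ker_eq_comap_bot, Ideal.infIrred_comap_iff_of_surjective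
        (map_surjective _ Ideal.Quotient.mk_surjective)]
      exact infIrred_bot (Ideal.infIrred_bot_quotient_iff.mpr hq)

end MvPolynomial

namespace MvPowerSeries

variable {σ S : Type*} [CommRing S]

theorem map_surjective {T : Type*} [CommRing T] {f : S →+* T} (hf : Function.Surjective f) :
    Function.Surjective (map (σ := σ) f) := fun G ↦
  ⟨fun m ↦ (hf (coeff m G)).choose, ext fun m ↦ (hf (coeff m G)).choose_spec⟩

theorem mem_ker_map_quotientMk {I : Ideal S} {F : MvPowerSeries σ S} :
    F ∈ RingHom.ker (map (Ideal.Quotient.mk I)) ↔ ∀ m, coeff m F ∈ I := by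
  simp [MvPowerSeries.ext_iff, Ideal.Quotient.eq_zero_iff_mem]

theorem exists_eq_smul_of_coeff_mem_span {w : S} {F : MvPowerSeries σ S}
    (h : ∀ m, coeff m F ∈ Ideal.span {w}) : ∃ F', F = w • F' := by
  choose a ha using fun m ↦ Ideal.mem_span_singleton'.mp (h m)
  let F' : MvPowerSeries σ S := a
  exact ⟨F', ext fun m ↦ by rw [coeff_smul, ← ha m, mul_comm]; rfl⟩

theorem infIrred_bot [IsNoetherianRing S] (hS : InfIrred (⊥ : Ideal S)) :
    InfIrred (⊥ : Ideal (MvPowerSeries σ S)) := by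
  have : Nontrivial S := (Ideal.infIrred_bot_iff.mp hS).1
  have : (nilradical S).IsPrime := Ideal.isPrime_radical hS.isPrimary
  refine infIrred_bot_of_coeff hS coeff (fun F h ↦ ext h) (fun F G h ↦ ?_)
    fun w F h ↦ exists_eq_smul_of_coeff_mem_span h
  simp only [← mem_ker_map_quotientMk, RingHom.mem_ker, map_mul, mul_eq_zero] at h ⊢
  exact h

theorem irIndex_eq [IsNoetherianRing S] :
    irIndex S S = irIndex (MvPowerSeries σ S) (MvPowerSeries σ S) :=
  irIndex_eq_of_coeff coeff (fun F h ↦ ext h) (i₀ := 0) (by simp)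
    (fun I ↦ RingHom.ker (map (Ideal.Quotient.mk I))) (fun _ _ ↦ mem_ker_map_quotientMk)
    fun q hq ↦ by
      rw [RingHom.ker_eq_comap_bot, Ideal.infIrred_comap_iff_of_surjective
        (map_surjective Ideal.Quotient.mk_surjective)]
      exact infIrred_bot (Ideal.infIrred_bot_quotient_iff.mpr hq)

end MvPowerSeries

theorem irIndex_polynomial_powerSeries_general (R : Type*) [CommRing R] [IsNoetherianRing R]
    (n : ℕ) :
    irIndex R R = irIndex (MvPolynomial (Fin n) R) (MvPolynomial (Fin n) R) ∧
      irIndex R R = irIndex (MvPowerSeries (Fin n) R) (MvPowerSeries (Fin n) R) :=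
  ⟨MvPolynomial.irIndex_eq, MvPowerSeries.irIndex_eq⟩

/-- For a nonzero Noetherian ring `R` and `n ≥ 1`,
`ir(R) = ir(R[x₁,…,xₙ]) = ir(R[[x₁,…,xₙ]])`. -/
theorem irIndex_polynomial_powerSeries (R : Type*) [CommRing R] [IsNoetherianRing R]
    [Nontrivial R] (n : ℕ) (hn : 0 < n) :
    irIndex R R = irIndex (MvPolynomial (Fin n) R) (MvPolynomial (Fin n) R) ∧
      irIndex R R = irIndex (MvPowerSeries (Fin n) R) (MvPowerSeries (Fin n) R) :=
  irIndex_polynomial_powerSeries_general R n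
end

section
/- Let R be a commutative Noetherian ring and A a nonzero Artinian R-module. Then ir'_R(A) ≥ Card(Att_R(A)), the number of attached primes of A. -/
/-!
A sum-irreducible submodule `C` of an Artinian module is secondary with attached prime `√(ann C)`:
by Fitting's lemma every `a ∈ R` acts on `C` either nilpotently or surjectively.

Let `A = ∑ Bᵢ` be a minimal secondary representation and `A = ∑_{C ∈ T} C` any sum of
sum-irreducible submodules. The quotient `A / ∑_{j ≠ i} Bⱼ` is the image of `Bᵢ`, hence
`pᵢ`-secondary, and it is the sum of the images of the `C ∈ T`. Its annihilator contains the
intersection of theirs, so the prime `pᵢ`, its radical, contains the annihilator of one nonzero image;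
comparing radicals of annihilators gives `√(ann C) = pᵢ`. So the distinct primes `pᵢ` all occur
among the `√(ann C)`, `C ∈ T`, and `n ≤ |T|`.
-/

/-- A submodule `B` of `A` is sum-irreducible if it is nonzero and cannot be written as the
sum of two strictly smaller submodules. -/
def IsSumIrredSubmodule (R A : Type*) [CommRing R] [AddCommGroup A] [Module R A]
    (B : Submodule R A) : Prop :=
  B ≠ ⊥ ∧ ∀ C D : Submodule R A, C ⊔ D = B → C = B ∨ D = B

open Classical in
/-- The sum-reducibility index `ir'_R(A)`: the number of components in an irredundant
representation of `A` as a sum of sum-irreducible submodules. -/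
noncomputable def coirIndex (R A : Type*) [CommRing R] [AddCommGroup A] [Module R A] : ℕ :=
  sInf {n | ∃ T : Finset (Submodule R A), T.card = n ∧ (∀ B ∈ T, IsSumIrredSubmodule R A B) ∧
    T.sup id = ⊤ ∧ ∀ B ∈ T, (T.erase B).sup id ≠ ⊤}

/-- A nonzero submodule `B` of `A` is `p`-secondary if multiplication by every `a ∈ p` is
nilpotent on `B` and multiplication by every `a ∉ p` is surjective on `B`. -/
def IsSecondarySubmodule (R A : Type*) [CommRing R] [AddCommGroup A] [Module R A]
    (p : Ideal R) (B : Submodule R A) : Prop :=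
  B ≠ ⊥ ∧ (∀ a ∈ p, ∃ n : ℕ, ∀ x ∈ B, a ^ n • x = (0 : A)) ∧
    ∀ a ∉ p, ∀ x ∈ B, ∃ y ∈ B, a • y = x

/-- A minimal secondary representation of `A`: `A = B 0 + … + B (n-1)` with `B i`
`p i`-secondary, the `p i` pairwise distinct primes, and no `B i` redundant. -/
def IsMinimalSecondaryRep (R A : Type*) [CommRing R] [AddCommGroup A] [Module R A]
    {n : ℕ} (B : Fin n → Submodule R A) (p : Fin n → Ideal R) : Prop :=
  (∀ i, (p i).IsPrime) ∧ (∀ i, IsSecondarySubmodule R A (p i) (B i)) ∧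
    Function.Injective p ∧ (⨆ i, B i) = ⊤ ∧
    ∀ i : Fin n, (⨆ j ∈ ({i}ᶜ : Set (Fin n)), B j) ≠ ⊤

section Secondary

variable {R M : Type*} [CommRing R] [AddCommGroup M] [Module R M]

theorem Submodule.pow_smul_surj {B : Submodule R M} {a : R}
    (ha : ∀ x ∈ B, ∃ y ∈ B, a • y = x) (k : ℕ) : ∀ x ∈ B, ∃ y ∈ B, a ^ k • y = x := by
  induction k with
  | zero => exact fun x hx => ⟨x, hx, by rw [pow_zero, one_smul]⟩
  | succ k ih =>
    intro x hx
    obtain ⟨y, hy, rfl⟩ := ha x hx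
    obtain ⟨z, hz, rfl⟩ := ih y hy
    exact ⟨z, hz, by rw [pow_succ', mul_smul]⟩

theorem Submodule.eq_bot_of_pow_smul_eq_zero_of_smul_surj {B : Submodule R M} {a : R} {n : ℕ}
    (hnil : ∀ x ∈ B, a ^ n • x = 0) (hsurj : ∀ x ∈ B, ∃ y ∈ B, a • y = x) : B = ⊥ := by
  refine (Submodule.eq_bot_iff B).2 fun x hx => ?_
  obtain ⟨y, hy, rfl⟩ := Submodule.pow_smul_surj hsurj n x hx
  exact hnil y hy

theorem Submodule.mem_radical_annihilator {B : Submodule R M} {a : R} :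
    a ∈ B.annihilator.radical ↔ ∃ n : ℕ, ∀ x ∈ B, a ^ n • x = 0 := by
  exact exists_congr fun _ => Submodule.mem_annihilator

theorem IsSecondarySubmodule.radical_annihilator {p : Ideal R} {B : Submodule R M}
    (hB : IsSecondarySubmodule R M p B) : B.annihilator.radical = p := by
  ext a
  rw [Submodule.mem_radical_annihilator]
  refine ⟨fun ⟨n, hn⟩ => ?_, hB.2.1 a⟩
  by_contra ha
  exact hB.1 (Submodule.eq_bot_of_pow_smul_eq_zero_of_smul_surj hn (hB.2.2 a ha))

theorem IsSecondarySubmodule.map {N : Type*} [AddCommGroup N] [Module R N]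
    {p : Ideal R} {B : Submodule R M} (hB : IsSecondarySubmodule R M p B) (f : M →ₗ[R] N) :
    B.map f = ⊥ ∨ IsSecondarySubmodule R N p (B.map f) := by
  refine or_iff_not_imp_left.2 fun hbot => ⟨hbot, fun a ha => ?_, fun a ha => ?_⟩
  · obtain ⟨n, hn⟩ := hB.2.1 a ha
    refine ⟨n, ?_⟩
    rintro _ ⟨x, hx, rfl⟩
    rw [← map_smul, hn x hx, map_zero]
  · rintro _ ⟨x, hx, rfl⟩
    obtain ⟨y, hy, rfl⟩ := hB.2.2 a ha x hx
    exact ⟨f y, Submodule.mem_map_of_mem hy, (map_smul f a y).symm⟩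

theorem IsSecondarySubmodule.exists_annihilator_le {ι : Type*} {p : Ideal R} [p.IsPrime]
    {E : Submodule R M} (hE : IsSecondarySubmodule R M p E) {s : Finset ι}
    {D : ι → Submodule R M} (hle : E ≤ s.sup D) : ∃ i ∈ s, (D i).annihilator ≤ p := by
  refine (Ideal.IsPrime.inf_le' ‹_›).1 ?_
  calc s.inf (fun i => (D i).annihilator)
      = (s.sup D).annihilator := by
        rw [Finset.sup_eq_iSup, Submodule.annihilator_iSup, Finset.inf_eq_iInf]
        simp only [Submodule.annihilator_iSup]
    _ ≤ E.annihilator := Submodule.annihilator_mono hle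
    _ ≤ E.annihilator.radical := Ideal.le_radical
    _ = p := hE.radical_annihilator

end Secondary

section SumIrreducible

variable {R M : Type*} [CommRing R] [AddCommGroup M] [Module R M] [IsArtinian R M]

/-- By Fitting's lemma `B = ker aⁿ + aⁿ B` for large `n`, and sum-irreducibility picks a summand. -/
theorem IsSumIrredSubmodule.pow_smul_eq_zero_or_smul_surj {B : Submodule R M}
    (hB : IsSumIrredSubmodule R M B) (a : R) :
    (∃ n : ℕ, ∀ x ∈ B, a ^ n • x = 0) ∨ ∀ x ∈ B, ∃ y ∈ B, a • y = x := by
  set f : Module.End R B := algebraMap R (Module.End R B) a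
  have hf (n : ℕ) (x : B) : (f ^ n) x = a ^ n • x := by
    rw [← map_pow, Module.algebraMap_end_apply]
  obtain ⟨n, hn⟩ := (LinearMap.eventually_codisjoint_ker_pow_range_pow f).exists_forall_of_atTop
  have hcod := codisjoint_iff.1 (hn (n + 1) n.le_succ)
  have hsum : (f ^ (n + 1)).ker.map B.subtype ⊔ (f ^ (n + 1)).range.map B.subtype = B := by
    rw [← Submodule.map_sup, hcod, Submodule.map_subtype_top]
  rcases hB.2 _ _ hsum with hker | hrange
  · refine Or.inl ⟨n + 1, fun x hx => ?_⟩
    obtain ⟨y, hy, rfl⟩ : x ∈ (f ^ (n + 1)).ker.map B.subtype := by rwa [hker]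
    rw [SetLike.mem_coe, LinearMap.mem_ker, hf] at hy
    exact congrArg Subtype.val hy
  · refine Or.inr fun x hx => ?_
    obtain ⟨_, ⟨y, rfl⟩, rfl⟩ : x ∈ (f ^ (n + 1)).range.map B.subtype := by rwa [hrange]
    refine ⟨a ^ n • (y : M), B.smul_mem _ y.2, ?_⟩
    rw [hf, smul_smul, ← pow_succ']
    rfl

theorem IsSumIrredSubmodule.isSecondarySubmodule {B : Submodule R M}
    (hB : IsSumIrredSubmodule R M B) : IsSecondarySubmodule R M B.annihilator.radical B :=
  ⟨hB.1, fun _ ha => Submodule.mem_radical_annihilator.1 ha, fun a ha =>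
    (hB.pow_smul_eq_zero_or_smul_surj a).resolve_left (mt Submodule.mem_radical_annihilator.2 ha)⟩

theorem exists_finset_sumIrred_sup_eq (N : Submodule R M) :
    ∃ T : Finset (Submodule R M), (∀ C ∈ T, IsSumIrredSubmodule R M C) ∧ T.sup id = N := by
  classical
  induction N using IsArtinian.induction with
  | _ N ih =>
    by_cases hbot : N = ⊥
    · exact ⟨∅, by simp, by simp [hbot]⟩
    by_cases hirr : IsSumIrredSubmodule R M N
    · exact ⟨{N}, by simpa using hirr, by simp⟩
    obtain ⟨C, D, hCD, hC, hD⟩ : ∃ C D : Submodule R M, C ⊔ D = N ∧ C ≠ N ∧ D ≠ N := by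
      simpa [IsSumIrredSubmodule, hbot] using hirr
    obtain ⟨TC, hTC, rfl⟩ := ih C (lt_of_le_of_ne (hCD ▸ le_sup_left) hC)
    obtain ⟨TD, hTD, rfl⟩ := ih D (lt_of_le_of_ne (hCD ▸ le_sup_right) hD)
    refine ⟨TC ∪ TD, fun E hE => ?_, by rw [Finset.sup_union, hCD]⟩
    exact (Finset.mem_union.1 hE).elim (hTC E) (hTD E)

end SumIrreducible

theorem Finset.exists_subset_sup_eq_and_erase_sup_ne {α ι : Type*} [SemilatticeSup α] [OrderBot α]
    [DecidableEq ι] {s : Finset ι} {f : ι → α} {a : α} (h : s.sup f = a) :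
    ∃ t ⊆ s, t.sup f = a ∧ ∀ i ∈ t, (t.erase i).sup f ≠ a := by
  obtain ⟨t, hts, hmin⟩ := exists_minimal_le_of_wellFoundedLT (fun t => t.sup f = a) s h
  exact ⟨t, hts, hmin.1, fun i hi hsup =>
    Finset.notMem_erase i t (hmin.2 hsup (Finset.erase_subset i t) hi)⟩

namespace IsMinimalSecondaryRep

variable {R A : Type*} [CommRing R] [AddCommGroup A] [Module R A]
  {n : ℕ} {B : Fin n → Submodule R A} {p : Fin n → Ideal R}

theorem isSecondarySubmodule_top_quotient (h : IsMinimalSecondaryRep R A B p) (i : Fin n) :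
    IsSecondarySubmodule R (A ⧸ ⨆ j ∈ ({i}ᶜ : Set (Fin n)), B j) (p i) ⊤ := by
  obtain ⟨-, hsec, -, hsup, hirr⟩ := h
  set N := ⨆ j ∈ ({i}ᶜ : Set (Fin n)), B j
  have hBN : N ⊔ B i = ⊤ := by
    rw [eq_top_iff, ← hsup]
    refine iSup_le fun j => ?_
    by_cases hj : j = i
    · exact hj ▸ le_sup_right
    · exact (le_biSup B hj).trans le_sup_left
  have hmap : (B i).map N.mkQ = ⊤ := (Submodule.map_mkQ_eq_top N (B i)).2 hBN
  have : Nontrivial (A ⧸ N) := Submodule.Quotient.nontrivial_iff.2 (hirr i)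
  rcases (hsec i).map N.mkQ with hbot | hsecN
  · exact absurd (hmap ▸ hbot) top_ne_bot
  · rwa [hmap] at hsecN

theorem exists_radical_annihilator_eq [IsArtinian R A] (h : IsMinimalSecondaryRep R A B p)
    {T : Finset (Submodule R A)} (hT : ∀ C ∈ T, IsSumIrredSubmodule R A C) (hTsup : T.sup id = ⊤)
    (i : Fin n) : ∃ C ∈ T, C.annihilator.radical = p i := by
  set N := ⨆ j ∈ ({i}ᶜ : Set (Fin n)), B j
  have := h.1 i
  have hle : ⊤ ≤ T.sup (Submodule.map N.mkQ ∘ id) := by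
    rw [← Finset.apply_sup_eq_sup_comp _ (Submodule.map_sup · · _) (Submodule.map_bot _), hTsup,
      Submodule.map_top, Submodule.range_mkQ]
  obtain ⟨C, hC, hann⟩ := (h.isSecondarySubmodule_top_quotient i).exists_annihilator_le hle
  have hne : C.map N.mkQ ≠ ⊥ := fun hbot =>
    (h.1 i).ne_top (top_le_iff.1 (Submodule.annihilator_eq_top_iff.2 hbot ▸ hann))
  have hsec := ((hT C hC).isSecondarySubmodule.map N.mkQ).resolve_left hne
  refine ⟨C, hC, le_antisymm ?_ ?_⟩
  · exact hsec.radical_annihilator ▸ ((h.1 i).radical_le_iff.2 hann)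
  · rw [← (h.isSecondarySubmodule_top_quotient i).radical_annihilator, ← hsec.radical_annihilator]
    exact Ideal.radical_mono (Submodule.annihilator_mono le_top)

theorem le_card [IsArtinian R A] (h : IsMinimalSecondaryRep R A B p)
    {T : Finset (Submodule R A)} (hT : ∀ C ∈ T, IsSumIrredSubmodule R A C) (hTsup : T.sup id = ⊤) :
    n ≤ T.card := by
  classical
  have hsub : Finset.univ.image p ⊆ T.image fun C => C.annihilator.radical := by
    intro q hq
    obtain ⟨i, -, rfl⟩ := Finset.mem_image.1 hq
    obtain ⟨C, hC, hCi⟩ := h.exists_radical_annihilator_eq hT hTsup i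
    exact Finset.mem_image.2 ⟨C, hC, hCi⟩
  calc n = (Finset.univ.image p).card := by
        rw [Finset.card_image_of_injective _ h.2.2.1, Finset.card_univ, Fintype.card_fin]
    _ ≤ (T.image fun C => C.annihilator.radical).card := Finset.card_le_card hsub
    _ ≤ T.card := Finset.card_image_le

end IsMinimalSecondaryRep

theorem card_att_le_coirIndex_general (R A : Type*) [CommRing R]
    [AddCommGroup A] [Module R A] [IsArtinian R A]
    {n : ℕ} (B : Fin n → Submodule R A) (p : Fin n → Ideal R)
    (h : IsMinimalSecondaryRep R A B p) :
    n ≤ coirIndex R A := by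
  classical
  obtain ⟨T₀, hT₀, hT₀sup⟩ := exists_finset_sumIrred_sup_eq (R := R) (⊤ : Submodule R A)
  obtain ⟨T, hTT₀, hTsup, hTirr⟩ := Finset.exists_subset_sup_eq_and_erase_sup_ne hT₀sup
  refine le_csInf ⟨T.card, T, rfl, fun C hC => hT₀ C (hTT₀ hC), hTsup, hTirr⟩ ?_
  rintro _ ⟨T', rfl, hT', hT'sup, -⟩
  exact h.le_card hT' hT'sup

/-- For a Noetherian ring `R` and a nonzero Artinian `R`-module `A`, the sum-reducibility
index of `A` is at least the number of attached primes of `A` (i.e. the number of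
components of any minimal secondary representation). -/
theorem card_att_le_coirIndex (R A : Type*) [CommRing R] [IsNoetherianRing R]
    [AddCommGroup A] [Module R A] [IsArtinian R A] [Nontrivial A]
    {n : ℕ} (B : Fin n → Submodule R A) (p : Fin n → Ideal R)
    (h : IsMinimalSecondaryRep R A B p) :
    n ≤ coirIndex R A :=
  card_att_le_coirIndex_general R A B p h
end

section
/- Let R be a commutative Noetherian ring, A a nonzero Artinian R-module, and B a proper submodule of A. Then ir'_R(A/B) ≤ ir'_R(A). In particular, if A is sum-irreducible, then so is A/B. -/
theorem Finset.exists_subset_sup_eq_forall_erase_sup_ne {α : Type*} [DecidableEq α]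
    [SemilatticeSup α] [OrderBot α] {a : α} (T : Finset α) (hT : T.sup id = a) :
    ∃ S ⊆ T, S.sup id = a ∧ ∀ B ∈ S, (S.erase B).sup id ≠ a := by
  induction T using Finset.strongInduction with
  | _ T ih =>
  by_cases h : ∃ B ∈ T, (T.erase B).sup id = a
  · obtain ⟨B, hB, hBa⟩ := h
    obtain ⟨S, hST, hSa, hS⟩ := ih (T.erase B) (Finset.erase_ssubset hB) hBa
    exact ⟨S, hST.trans (Finset.erase_subset _ _), hSa, hS⟩
  · push Not at h
    exact ⟨T, Finset.Subset.refl _, hT, h⟩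

section

variable {R A A' : Type*} [CommRing R] [AddCommGroup A] [Module R A]
  [AddCommGroup A'] [Module R A']

theorem sup_inf_comap_eq_of_sup_eq_map (f : A →ₗ[R] A') {C : Submodule R A}
    {X Y : Submodule R A'} (hXY : X ⊔ Y = C.map f) :
    (C ⊓ X.comap f) ⊔ (C ⊓ Y.comap f) = C := by
  refine le_antisymm (sup_le inf_le_left inf_le_left) fun c hc => ?_
  obtain ⟨x, hx, y, hy, hxy⟩ := Submodule.mem_sup.1 (hXY ▸ Submodule.mem_map_of_mem hc)
  obtain ⟨c₁, hc₁, rfl⟩ : x ∈ C.map f := hXY ▸ Submodule.mem_sup_left hx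
  refine Submodule.mem_sup.2 ⟨c₁, ⟨hc₁, hx⟩, c - c₁, ⟨sub_mem hc hc₁, ?_⟩, add_sub_cancel c₁ c⟩
  show f (c - c₁) ∈ Y
  rwa [map_sub, ← hxy, add_sub_cancel_left]

theorem IsSumIrredSubmodule.map (f : A →ₗ[R] A') {C : Submodule R A}
    (hC : IsSumIrredSubmodule R A C) (h0 : C.map f ≠ ⊥) :
    IsSumIrredSubmodule R A' (C.map f) := by
  refine ⟨h0, fun X Y hXY => ?_⟩
  have map_le {Z : Submodule R A'} (hZ : C ⊓ Z.comap f = C) : C.map f ≤ Z :=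
    Submodule.map_le_iff_le_comap.2 (inf_eq_left.1 hZ)
  rcases hC.2 _ _ (sup_inf_comap_eq_of_sup_eq_map f hXY) with hX | hY
  · exact Or.inl (le_antisymm (hXY ▸ le_sup_left) (map_le hX))
  · exact Or.inr (le_antisymm (hXY ▸ le_sup_right) (map_le hY))

theorem IsSumIrredSubmodule.top_of_surjective [Nontrivial A'] {f : A →ₗ[R] A'}
    (hf : Function.Surjective f) (h : IsSumIrredSubmodule R A ⊤) :
    IsSumIrredSubmodule R A' ⊤ := by
  have hmap : (⊤ : Submodule R A).map f = ⊤ := by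
    rw [Submodule.map_top, LinearMap.range_eq_top.2 hf]
  simpa only [hmap] using h.map f (hmap ▸ top_ne_bot)

theorem exists_finset_isSumIrredSubmodule_sup_eq [IsArtinian R A] (N : Submodule R A) :
    ∃ T : Finset (Submodule R A), (∀ C ∈ T, IsSumIrredSubmodule R A C) ∧ T.sup id = N := by
  classical
  induction N using WellFoundedLT.induction with
  | ind N ih =>
  by_cases hN : N = ⊥
  · exact ⟨∅, by simp, by simp [hN]⟩
  by_cases hirr : IsSumIrredSubmodule R A N
  · exact ⟨{N}, by simpa using hirr, by simp⟩
  obtain ⟨C, D, hCD, hC, hD⟩ : ∃ C D, C ⊔ D = N ∧ C ≠ N ∧ D ≠ N := by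
    simpa [IsSumIrredSubmodule, hN] using hirr
  obtain ⟨T₁, hT₁, rfl⟩ := ih C (lt_of_le_of_ne (hCD ▸ le_sup_left) hC)
  obtain ⟨T₂, hT₂, rfl⟩ := ih D (lt_of_le_of_ne (hCD ▸ le_sup_right) hD)
  refine ⟨T₁ ∪ T₂, fun B hB => ?_, by rw [Finset.sup_union, hCD]⟩
  exact (Finset.mem_union.1 hB).elim (hT₁ B) (hT₂ B)

open Classical in
theorem coirIndex_le_card (T : Finset (Submodule R A))
    (hirr : ∀ C ∈ T, IsSumIrredSubmodule R A C) (hT : T.sup id = ⊤) :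
    coirIndex R A ≤ T.card := by
  obtain ⟨S, hST, hS, hS_irred⟩ := T.exists_subset_sup_eq_forall_erase_sup_ne hT
  exact le_trans (Nat.sInf_le ⟨S, rfl, fun C hC => hirr C (hST hC), hS, hS_irred⟩)
    (Finset.card_le_card hST)

open Classical in
theorem exists_card_eq_coirIndex [IsArtinian R A] :
    ∃ T : Finset (Submodule R A), T.card = coirIndex R A ∧
      (∀ C ∈ T, IsSumIrredSubmodule R A C) ∧ T.sup id = ⊤ := by
  obtain ⟨T, hirr, hT⟩ := exists_finset_isSumIrredSubmodule_sup_eq (⊤ : Submodule R A)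
  obtain ⟨S, hST, hS, hS_irred⟩ := T.exists_subset_sup_eq_forall_erase_sup_ne hT
  obtain ⟨U, hU, hU_irr, hU_sup, -⟩ : coirIndex R A ∈ _ :=
    Nat.sInf_mem ⟨S.card, S, rfl, fun C hC => hirr C (hST hC), hS, hS_irred⟩
  exact ⟨U, hU, hU_irr, hU_sup⟩

open Classical in
theorem coirIndex_le_of_surjective [IsArtinian R A] {f : A →ₗ[R] A'}
    (hf : Function.Surjective f) : coirIndex R A' ≤ coirIndex R A := by
  obtain ⟨T, hcard, hirr, hT⟩ := exists_card_eq_coirIndex (R := R) (A := A)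
  set U := (T.image (Submodule.map f)).erase ⊥
  have hU_sup : U.sup id = ⊤ := by
    have hmap : (T.sup id).map f = T.sup (Submodule.map f) :=
      Finset.apply_sup_eq_sup_comp _ (fun p q => Submodule.map_sup p q f) (Submodule.map_bot f)
    rw [Finset.sup_erase_bot, Finset.sup_image, Function.id_comp, ← hmap, hT,
      Submodule.map_top, LinearMap.range_eq_top.2 hf]
  have hU_irr : ∀ C ∈ U, IsSumIrredSubmodule R A' C := by
    simp only [U, Finset.mem_erase, Finset.mem_image]
    rintro _ ⟨h0, D, hD, rfl⟩
    exact (hirr D hD).map f h0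
  calc coirIndex R A' ≤ U.card := coirIndex_le_card U hU_irr hU_sup
    _ ≤ (T.image (Submodule.map f)).card := Finset.card_le_card (Finset.erase_subset _ _)
    _ ≤ T.card := Finset.card_image_le
    _ = coirIndex R A := hcard

end

theorem coirIndex_quotient_le_general (R A : Type*) [CommRing R]
    [AddCommGroup A] [Module R A] [IsArtinian R A]
    (B : Submodule R A) (hB : B ≠ ⊤) :
    coirIndex R (A ⧸ B) ≤ coirIndex R A ∧
      (IsSumIrredSubmodule R A ⊤ → IsSumIrredSubmodule R (A ⧸ B) ⊤) := by
  have : Nontrivial (A ⧸ B) := Submodule.Quotient.nontrivial_iff.2 hB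
  exact ⟨coirIndex_le_of_surjective B.mkQ_surjective,
    IsSumIrredSubmodule.top_of_surjective B.mkQ_surjective⟩

/-- For a Noetherian ring `R`, a nonzero Artinian `R`-module `A` and a proper submodule
`B ⊊ A`, one has `ir'_R(A/B) ≤ ir'_R(A)`; in particular, if `A` is sum-irreducible then
so is `A/B`. -/
theorem coirIndex_quotient_le (R A : Type*) [CommRing R] [IsNoetherianRing R]
    [AddCommGroup A] [Module R A] [IsArtinian R A] [Nontrivial A]
    (B : Submodule R A) (hB : B ≠ ⊤) :
    coirIndex R (A ⧸ B) ≤ coirIndex R A ∧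
      (IsSumIrredSubmodule R A ⊤ → IsSumIrredSubmodule R (A ⧸ B) ⊤) :=
  coirIndex_quotient_le_general R A B hB
end

section
/- Let R be a commutative Noetherian ring, A a nonzero Artinian R-module, and A = B_1 + … + B_n a minimal secondary representation of A with B_i p_i-secondary for i = 1, …, n. If B_i is a p_i-minimal embedded component of A for every embedded attached prime p_i of A, then ir'_R(A) = ir'_R(B_1) + … + ir'_R(B_n). -/
/-- `C` belongs to `Λ'_p(A)`: `C` is a `p`-secondary submodule occurring in some minimal
secondary representation of `A`. -/
def MemSecondaryComponents (R A : Type*) [CommRing R] [AddCommGroup A] [Module R A]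
    (p : Ideal R) (C : Submodule R A) : Prop :=
  ∃ (n : ℕ) (B : Fin n → Submodule R A) (q : Fin n → Ideal R),
    IsMinimalSecondaryRep R A B q ∧ ∃ i, q i = p ∧ B i = C

/-- `C` is a `p`-minimal embedded component of `A`: a minimal element of `Λ'_p(A)`
under inclusion. -/
def IsMinimalEmbeddedComponent (R A : Type*) [CommRing R] [AddCommGroup A] [Module R A]
    (p : Ideal R) (C : Submodule R A) : Prop :=
  MemSecondaryComponents R A p C ∧
    ∀ D : Submodule R A, MemSecondaryComponents R A p D → D ≤ C → D = C

/-!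
Submodules of `A` form a modular lattice, and there the Kurosh–Ore exchange argument shows that
all irredundant decompositions of an element into sup-irreducible elements have the same length;
`ir'_R(A)` is that length. Choose irredundant decompositions `S i` of the `B i`. Their union is
an irredundant decomposition of `A` with pairwise disjoint pieces as soon as no `D < B i`
satisfies `D + ∑_{j ≠ i} B j = A`, and this is what the hypotheses give.

If `p i` is minimal and `B i ⊄ D`, then `⋂_{j ≠ i} ann (B j)` annihilates `(B i + D) / D`,
whose annihilator has radical `p i`, so some `ann (B j) ⊆ p i` and `p j < p i`. If `p i` is
embedded, use that sum-irreducible submodules of an Artinian module are secondary: grouping a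
decomposition of `D` together with the `B j`, `j ≠ i`, by attached primes and pruning gives a
minimal secondary representation of `A`. Since `A / ∑_{j ≠ i} B j` is `p i`-secondary, `p i`
occurs in every secondary representation of `A`, and in this one its component lies in `D`,
which contradicts the minimality of `B i` in `Λ'_{p i}(A)`.
-/

open Finset

section Modular

variable {α : Type*} [Lattice α] [IsModularLattice α]

theorem SupIrred.eq_or_eq_of_sup_eq {a c p x y : α} (hc : SupIrred c) (hcp : c ⊔ p = a)
    (hpx : p ≤ x) (hpy : p ≤ y) (hxy : x ⊔ y = a) : x = a ∨ y = a := by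
  have hxa : x ≤ a := hxy ▸ le_sup_left
  have hya : y ≤ a := hxy ▸ le_sup_right
  set z := c ⊓ x ⊔ c ⊓ y
  -- modularity: `x = p ⊔ c ⊓ x` and `y = p ⊔ c ⊓ y`, so `c = c ⊓ (z ⊔ p) = z ⊔ p ⊓ c = z`
  have hx : p ⊔ c ⊓ x = x := by
    rw [← sup_inf_assoc_of_le c hpx, sup_comm, hcp, inf_eq_right.mpr hxa]
  have hy : p ⊔ c ⊓ y = y := by
    rw [← sup_inf_assoc_of_le c hpy, sup_comm, hcp, inf_eq_right.mpr hya]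
  have hz : z = c := by
    have hzc : z ≤ c := sup_le inf_le_left inf_le_left
    have hza : z ⊔ p = a := by
      rw [← hxy, ← hx, ← hy]
      ac_rfl
    have hpcz : p ⊓ c ≤ z := (le_inf inf_le_right (inf_le_left.trans hpx)).trans le_sup_left
    calc z = z ⊔ p ⊓ c := (sup_eq_left.mpr hpcz).symm
      _ = (z ⊔ p) ⊓ c := (sup_inf_assoc_of_le p hzc).symm
      _ = c := by rw [hza, ← hcp, inf_eq_right.mpr le_sup_left]
  rcases hc.2 hz with h | h
  · exact .inl (le_antisymm hxa (hcp ▸ sup_le (h ▸ inf_le_right) hpx))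
  · exact .inr (le_antisymm hya (hcp ▸ sup_le (h ▸ inf_le_right) hpy))

variable [OrderBot α]

theorem SupIrred.exists_mem_sup_eq {a c p : α} (hc : SupIrred c) (hcp : c ⊔ p = a) (hpa : p ≠ a)
    (S : Finset α) (hS : S.sup id ⊔ p = a) : ∃ d ∈ S, d ⊔ p = a := by
  classical
  induction S using Finset.induction_on with
  | empty => exact absurd (by simpa using hS) hpa
  | insert d S _ ih =>
    have hsplit : (d ⊔ p) ⊔ (S.sup id ⊔ p) = a := by
      rw [← hS, sup_insert, id]
      ac_rfl
    rcases hc.eq_or_eq_of_sup_eq hcp le_sup_right le_sup_right hsplit with h | h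
    · exact ⟨d, mem_insert_self d S, h⟩
    · obtain ⟨d', hd', h'⟩ := ih h
      exact ⟨d', mem_insert_of_mem hd', h'⟩

theorem exists_subset_sup_eq_card_le {a : α} {S T : Finset α} (hS : S.sup id = a)
    (hT : ∀ c ∈ T, SupIrred c) (p : α) (hTp : T.sup id ⊔ p = a) :
    ∃ U ⊆ S, U.sup id ⊔ p = a ∧ U.card ≤ T.card := by
  classical
  induction T using Finset.induction_on generalizing p with
  | empty => exact ⟨∅, empty_subset S, by simpa using hTp, by simp⟩
  | insert c T hcT ih =>
    have hT' : ∀ b ∈ T, SupIrred b := fun b hb => hT b (mem_insert_of_mem hb)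
    rw [card_insert_of_notMem hcT]
    have hcp : c ⊔ (T.sup id ⊔ p) = a := by rw [← hTp, sup_insert, id, sup_assoc]
    by_cases hpa : T.sup id ⊔ p = a
    · obtain ⟨U, hUS, hU, hcard⟩ := ih hT' p hpa
      exact ⟨U, hUS, hU, hcard.trans (Nat.le_succ _)⟩
    have hSp : S.sup id ⊔ (T.sup id ⊔ p) = a := by
      rw [hS, sup_eq_left]
      exact hcp ▸ le_sup_right
    obtain ⟨d, hdS, hd⟩ :=
      (hT c (mem_insert_self c T)).exists_mem_sup_eq hcp hpa S hSp
    obtain ⟨U, hUS, hU, hcard⟩ := ih hT' (d ⊔ p) (by rw [← hd]; ac_rfl)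
    refine ⟨insert d U, insert_subset hdS hUS, ?_, (card_insert_le d U).trans (by omega)⟩
    rw [sup_insert, id, ← hU]
    ac_rfl

end Modular

section IrredundantDecomposition

variable {α : Type*} [Lattice α] [OrderBot α] [DecidableEq α]

structure IsIrredundantSupDecomp (a : α) (T : Finset α) : Prop where
  supIrred : ∀ b ∈ T, SupIrred b
  sup_eq : T.sup id = a
  erase_sup_ne : ∀ b ∈ T, (T.erase b).sup id ≠ a

theorem Finset.exists_subset_sup_eq_forall_erase_sup_ne_s12 {ι : Type*} [DecidableEq ι]
    (f : ι → α) (s : Finset ι) :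
    ∃ t ⊆ s, t.sup f = s.sup f ∧ ∀ x ∈ t, (t.erase x).sup f ≠ s.sup f := by
  obtain ⟨t, ht, hmin⟩ := (s.powerset.filter fun t => t.sup f = s.sup f).exists_min_image card
    ⟨s, by simp⟩
  rw [mem_filter, mem_powerset] at ht
  refine ⟨t, ht.1, ht.2, fun x hx hsup => ?_⟩
  have := hmin (t.erase x) (by simpa [hsup] using (erase_subset x t).trans ht.1)
  exact (card_erase_lt_of_mem hx).not_ge this

theorem exists_isIrredundantSupDecomp [WellFoundedLT α] (a : α) :
    ∃ T, IsIrredundantSupDecomp a T := by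
  obtain ⟨s, rfl, hs⟩ := exists_supIrred_decomposition a
  obtain ⟨t, hts, hsup, hirr⟩ := s.exists_subset_sup_eq_forall_erase_sup_ne_s12 id
  exact ⟨t, fun b hb => hs (hts hb), hsup, hirr⟩

theorem IsIrredundantSupDecomp.eq_of_subset {a : α} {S U : Finset α}
    (hS : IsIrredundantSupDecomp a S) (hUS : U ⊆ S) (hU : U.sup id = a) : U = S := by
  by_contra hne
  obtain ⟨b, hbS, hbU⟩ := exists_of_ssubset (hUS.ssubset_of_ne hne)
  refine hS.erase_sup_ne b hbS (le_antisymm ?_ ?_)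
  · exact hS.sup_eq ▸ Finset.sup_mono (erase_subset b S)
  · exact hU ▸ Finset.sup_mono (subset_erase.mpr ⟨hUS, hbU⟩)

theorem IsIrredundantSupDecomp.card_le [IsModularLattice α] {a : α} {S T : Finset α}
    (hS : IsIrredundantSupDecomp a S) (hT : ∀ c ∈ T, SupIrred c) (hTa : T.sup id = a) :
    S.card ≤ T.card := by
  obtain ⟨U, hUS, hU, hcard⟩ := exists_subset_sup_eq_card_le hS.sup_eq hT ⊥ (by simpa using hTa)
  rwa [← hS.eq_of_subset hUS (by simpa using hU)]

/-- The Kurosh–Ore theorem. -/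
theorem IsIrredundantSupDecomp.card_eq [IsModularLattice α] {a : α} {S T : Finset α}
    (hS : IsIrredundantSupDecomp a S) (hT : IsIrredundantSupDecomp a T) : S.card = T.card :=
  (hS.card_le hT.supIrred hT.sup_eq).antisymm (hT.card_le hS.supIrred hS.sup_eq)

end IrredundantDecomposition

section Union

variable {α ι : Type*} [CompleteLattice α] {b : ι → α} {S : ι → Finset α}

theorem le_biSup_compl_of_mem (hS : ∀ i, (S i).sup id = b i) {i j : ι} (hij : j ≠ i) {c : α}
    (hc : c ∈ S j) : c ≤ ⨆ k ∈ ({i}ᶜ : Set ι), b k :=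
  ((hS j) ▸ le_sup (f := id) hc).trans (le_biSup b hij)

variable [DecidableEq α]

theorem IsIrredundantSupDecomp.not_iSup_le_erase_sup_sup
    (hS : ∀ i, IsIrredundantSupDecomp (b i) (S i))
    (hsep : ∀ i, ∀ c ∈ S i, ((S i).erase c).sup id ⊔ ⨆ j ∈ ({i}ᶜ : Set ι), b j ≠ ⨆ j, b j)
    {i : ι} {c : α} (hc : c ∈ S i) :
    ¬ ⨆ j, b j ≤ ((S i).erase c).sup id ⊔ ⨆ j ∈ ({i}ᶜ : Set ι), b j := fun hle =>
  hsep i c hc <| le_antisymm (sup_le ((Finset.sup_mono (erase_subset c (S i))).trans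
    ((hS i).sup_eq.le.trans (le_iSup b i))) (iSup₂_le fun j _ => le_iSup b j)) hle

variable [Fintype ι]

theorem erase_biUnion_sup_le (hS : ∀ i, (S i).sup id = b i) {i : ι} {c : α} (hc : c ∈ S i) :
    ((univ.biUnion S).erase c).sup id ≤ ((S i).erase c).sup id ⊔ ⨆ j ∈ ({i}ᶜ : Set ι), b j := by
  refine Finset.sup_le fun x hx => ?_
  obtain ⟨hxc, hx⟩ := mem_erase.mp hx
  obtain ⟨j, -, hxj⟩ := mem_biUnion.mp hx
  by_cases hji : j = i
  · subst hji
    exact le_sup_of_le_left (le_sup (f := id) (mem_erase.mpr ⟨hxc, hxj⟩))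
  · exact le_sup_of_le_right (le_biSup_compl_of_mem hS hji hxj)

theorem IsIrredundantSupDecomp.biUnion (hS : ∀ i, IsIrredundantSupDecomp (b i) (S i))
    (hsep : ∀ i, ∀ c ∈ S i, ((S i).erase c).sup id ⊔ ⨆ j ∈ ({i}ᶜ : Set ι), b j ≠ ⨆ j, b j) :
    IsIrredundantSupDecomp (⨆ j, b j) (univ.biUnion S) := by
  refine ⟨fun c hc => ?_, ?_, fun c hc htop => ?_⟩
  · obtain ⟨i, -, hci⟩ := mem_biUnion.mp hc
    exact (hS i).supIrred c hci
  · rw [sup_biUnion, sup_univ_eq_iSup]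
    exact iSup_congr fun i => (hS i).sup_eq
  · obtain ⟨i, -, hci⟩ := mem_biUnion.mp hc
    exact not_iSup_le_erase_sup_sup hS hsep hci
      (htop ▸ erase_biUnion_sup_le (fun i => (hS i).sup_eq) hci)

theorem IsIrredundantSupDecomp.card_biUnion (hS : ∀ i, IsIrredundantSupDecomp (b i) (S i))
    (hsep : ∀ i, ∀ c ∈ S i, ((S i).erase c).sup id ⊔ ⨆ j ∈ ({i}ᶜ : Set ι), b j ≠ ⨆ j, b j) :
    (univ.biUnion S).card = ∑ i, (S i).card := by
  refine Finset.card_biUnion fun i _ j _ hij => disjoint_left.mpr fun c hci hcj => ?_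
  have hS' : ∀ i, (S i).sup id = b i := fun i => (hS i).sup_eq
  refine not_iSup_le_erase_sup_sup hS hsep hci ?_
  calc ⨆ j, b j = (univ.biUnion S).sup id := (IsIrredundantSupDecomp.biUnion hS hsep).sup_eq.symm
    _ = c ⊔ ((univ.biUnion S).erase c).sup id := by
      conv_lhs => rw [← insert_erase (mem_biUnion.mpr ⟨i, mem_univ i, hci⟩)]
      rw [sup_insert, id]
    _ ≤ _ := sup_le (le_sup_of_le_right (le_biSup_compl_of_mem hS' (Ne.symm hij) hcj))
      (erase_biUnion_sup_le hS' hci)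

end Union

section OrderEmbedding

variable {α β : Type*} [Lattice α] [Lattice β] (f : α ↪o β)

theorem OrderEmbedding.map_sup_of_isLowerSet_range (hf : IsLowerSet (Set.range f)) (x y : α) :
    f (x ⊔ y) = f x ⊔ f y := by
  obtain ⟨z, hz⟩ := hf (f.monotone.le_map_sup x y) ⟨x ⊔ y, rfl⟩
  refine le_antisymm ?_ (f.monotone.le_map_sup x y)
  rw [← hz, f.le_iff_le]
  exact sup_le (f.le_iff_le.mp (hz ▸ le_sup_left)) (f.le_iff_le.mp (hz ▸ le_sup_right))

theorem OrderEmbedding.supIrred_apply_iff_of_isLowerSet_range (hf : IsLowerSet (Set.range f))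
    {a : α} : SupIrred (f a) ↔ SupIrred a := by
  have hmin : IsMin (f a) ↔ IsMin a := by
    refine ⟨fun h c hca => f.le_iff_le.mp (h (f.monotone hca)), fun h y hya => ?_⟩
    obtain ⟨c, rfl⟩ := hf hya ⟨a, rfl⟩
    exact f.monotone (h (f.le_iff_le.mp hya))
  refine ⟨fun h => ⟨hmin.not.mp h.1, fun x y hxy => ?_⟩,
    fun h => ⟨hmin.not.mpr h.1, fun y z hyz => ?_⟩⟩
  · have := h.2 (by rw [← f.map_sup_of_isLowerSet_range hf, hxy])
    exact this.imp (f.injective ·) (f.injective ·)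
  · obtain ⟨x, rfl⟩ := hf (hyz ▸ le_sup_left) ⟨a, rfl⟩
    obtain ⟨w, rfl⟩ := hf (hyz ▸ le_sup_right) ⟨a, rfl⟩
    rw [← f.map_sup_of_isLowerSet_range hf] at hyz
    exact (h.2 (f.injective hyz)).imp (congrArg f) (congrArg f)

theorem IsIrredundantSupDecomp.map [OrderBot α] [OrderBot β] [DecidableEq α] [DecidableEq β]
    (hf : IsLowerSet (Set.range f)) {a : α} {T : Finset α} (hT : IsIrredundantSupDecomp a T) :
    IsIrredundantSupDecomp (f a) (T.map f.toEmbedding) := by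
  have hbot : f ⊥ = ⊥ := by
    obtain ⟨x, hx⟩ := hf bot_le ⟨⊥, rfl⟩
    exact le_antisymm (hx ▸ f.monotone bot_le) bot_le
  have hsup : ∀ s : Finset α, (s.map f.toEmbedding).sup id = f (s.sup id) := fun s => by
    rw [Finset.sup_map, Finset.apply_sup_eq_sup_comp f (f.map_sup_of_isLowerSet_range hf) hbot]
    rfl
  refine ⟨fun b hb => ?_, by rw [hsup, hT.sup_eq], fun b hb h => ?_⟩
  · obtain ⟨c, hc, rfl⟩ := Finset.mem_map.mp hb
    exact (f.supIrred_apply_iff_of_isLowerSet_range hf).mpr (hT.supIrred c hc)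
  · obtain ⟨c, hc, rfl⟩ := Finset.mem_map.mp hb
    rw [← Finset.map_erase, hsup] at h
    exact hT.erase_sup_ne c hc (f.injective h)

end OrderEmbedding

section Module

variable {R M : Type*} [CommRing R] [AddCommGroup M] [Module R M]

theorem isSumIrredSubmodule_iff_supIrred {B : Submodule R M} :
    IsSumIrredSubmodule R M B ↔ SupIrred B :=
  and_congr isMin_iff_eq_bot.not.symm ⟨fun h C D => h C D, fun h C D => @h C D⟩

theorem Submodule.isLowerSet_range_mapSubtype_orderEmbedding (W : Submodule R M) :
    IsLowerSet (Set.range (Submodule.MapSubtype.orderEmbedding W)) := by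
  rintro _ y hyx ⟨x, rfl⟩
  refine ⟨Submodule.comap W.subtype y, ?_⟩
  rw [Submodule.map_subtype_embedding_eq, Submodule.map_comap_subtype, inf_eq_right]
  exact hyx.trans (Submodule.map_subtype_le W x)

theorem SupIrred.supIrred_top_submodule {W : Submodule R M} (hW : SupIrred W) :
    SupIrred (⊤ : Submodule R W) := by
  rw [← (Submodule.MapSubtype.orderEmbedding W).supIrred_apply_iff_of_isLowerSet_range
    W.isLowerSet_range_mapSubtype_orderEmbedding]
  simpa using hW

open Classical in
theorem coirIndex_eq_card {T : Finset (Submodule R M)}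
    (hT : IsIrredundantSupDecomp (⊤ : Submodule R M) T) : coirIndex R M = T.card := by
  have hset : {n | ∃ T : Finset (Submodule R M), T.card = n ∧
      (∀ B ∈ T, IsSumIrredSubmodule R M B) ∧ T.sup id = ⊤ ∧
      ∀ B ∈ T, (T.erase B).sup id ≠ ⊤} = {T.card} := by
    ext n
    constructor
    · rintro ⟨T', rfl, hirr, hsup, herase⟩
      exact IsIrredundantSupDecomp.card_eq
        ⟨fun B hB => isSumIrredSubmodule_iff_supIrred.mp (hirr B hB), hsup, herase⟩ hT
    · rintro rfl
      exact ⟨T, rfl, fun B hB => isSumIrredSubmodule_iff_supIrred.mpr (hT.supIrred B hB),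
        hT.sup_eq, hT.erase_sup_ne⟩
  rw [coirIndex, hset, csInf_singleton]

open Classical in
theorem coirIndex_submodule_eq_card [IsArtinian R M] {W : Submodule R M}
    {T : Finset (Submodule R M)} (hT : IsIrredundantSupDecomp W T) :
    coirIndex R W = T.card := by
  obtain ⟨T', hT'⟩ := exists_isIrredundantSupDecomp (⊤ : Submodule R W)
  have hmap := hT'.map _ W.isLowerSet_range_mapSubtype_orderEmbedding
  rw [Submodule.map_subtype_embedding_eq, Submodule.map_subtype_top] at hmap
  rw [coirIndex_eq_card hT', ← hmap.card_eq hT, Finset.card_map]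

theorem exists_pow_smul_eq_zero_or_surjective [IsArtinian R M]
    (hM : SupIrred (⊤ : Submodule R M)) (a : R) :
    (∃ n : ℕ, ∀ x : M, a ^ n • x = 0) ∨ Function.Surjective fun x : M => a • x := by
  set f := algebraMap R (Module.End R M) a
  obtain ⟨n, hcod, hn⟩ :=
    (f.eventually_codisjoint_ker_pow_range_pow.and (Filter.eventually_ge_atTop 1)).exists
  rcases hM.2 (codisjoint_iff.mp hcod) with h | h
  · refine .inl ⟨n, fun x => ?_⟩
    have : (f ^ n) x = 0 := LinearMap.ker_eq_top.mp h ▸ rfl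
    rwa [← map_pow, Module.algebraMap_end_apply] at this
  · refine .inr fun x => ?_
    obtain ⟨y, hy⟩ := LinearMap.range_eq_top.mp h x
    obtain ⟨m, rfl⟩ := Nat.exists_eq_add_of_le' hn
    refine ⟨a ^ m • y, ?_⟩
    rwa [← map_pow, Module.algebraMap_end_apply, pow_succ', mul_smul] at hy

end Module

open Pointwise

section Secondary

variable {R M : Type*} [CommRing R] [AddCommGroup M] [Module R M] {p : Ideal R}
  {B : Submodule R M}

theorem isSecondarySubmodule_iff : IsSecondarySubmodule R M p B ↔
    B ≠ ⊥ ∧ p ≤ B.annihilator.radical ∧ ∀ a ∉ p, a • B = B := by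
  refine and_congr Iff.rfl (and_congr ?_ (forall₂_congr fun a _ => ?_))
  · simp only [SetLike.le_def, Ideal.mem_radical_iff, Submodule.mem_annihilator]
  · refine ⟨fun h => le_antisymm (B.smul_le_self_of_tower a) fun x hx => ?_, fun h x hx => ?_⟩
    · obtain ⟨y, hy, rfl⟩ := h x hx
      exact Submodule.smul_mem_pointwise_smul y a B hy
    · exact (Submodule.mem_smul_pointwise_iff_exists x a B).mp (h.symm ▸ hx)

theorem IsSecondarySubmodule.smul_eq (hB : IsSecondarySubmodule R M p B) {a : R} (ha : a ∉ p) :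
    a • B = B :=
  (isSecondarySubmodule_iff.mp hB).2.2 a ha

theorem IsSecondarySubmodule.pow_smul_eq (hB : IsSecondarySubmodule R M p B) {a : R}
    (ha : a ∉ p) (k : ℕ) : a ^ k • B = B := by
  induction k with
  | zero => rw [pow_zero, one_smul]
  | succ k ih => rw [pow_succ, mul_smul, hB.smul_eq ha, ih]

theorem IsSecondarySubmodule.exists_pow_smul_eq_bot (hB : IsSecondarySubmodule R M p B) {a : R}
    (ha : a ∈ p) : ∃ k : ℕ, a ^ k • B = ⊥ := by
  obtain ⟨k, hk⟩ := hB.2.1 a ha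
  refine ⟨k, eq_bot_iff.mpr fun x hx => ?_⟩
  obtain ⟨y, hy, rfl⟩ := (Submodule.mem_smul_pointwise_iff_exists x _ B).mp hx
  exact (hk y hy).symm ▸ Submodule.zero_mem ⊥

theorem IsSecondarySubmodule.isPrime (hB : IsSecondarySubmodule R M p B) : p.IsPrime := by
  refine ⟨fun htop => hB.1 ?_, fun {a b} hab => ?_⟩
  · obtain ⟨k, hk⟩ := hB.exists_pow_smul_eq_bot (htop ▸ Submodule.mem_top : (1 : R) ∈ p)
    rwa [one_pow, one_smul] at hk
  · by_contra! h
    obtain ⟨k, hk⟩ := hB.exists_pow_smul_eq_bot hab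
    rw [mul_pow, mul_smul, hB.pow_smul_eq h.2, hB.pow_smul_eq h.1] at hk
    exact hB.1 hk

theorem IsSecondarySubmodule.radical_colon_eq (hB : IsSecondarySubmodule R M p B)
    {N : Submodule R M} (hBN : ¬ B ≤ N) : (N.colon B).radical = p := by
  refine le_antisymm (fun a ha' => ?_) ?_
  · obtain ⟨k, hk⟩ := ha'
    by_contra ha
    rw [Submodule.mem_colon_iff_le, hB.pow_smul_eq ha] at hk
    exact hBN hk
  · refine (isSecondarySubmodule_iff.mp hB).2.1.trans (Ideal.radical_mono ?_)
    rw [← Submodule.bot_colon]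
    exact Submodule.colon_mono bot_le subset_rfl

theorem IsSecondarySubmodule.radical_annihilator_eq (hB : IsSecondarySubmodule R M p B) :
    B.annihilator.radical = p := by
  rw [← Submodule.bot_colon]
  exact hB.radical_colon_eq (le_bot_iff.not.mpr hB.1)

theorem IsSecondarySubmodule.sup {B' : Submodule R M} (hB : IsSecondarySubmodule R M p B)
    (hB' : IsSecondarySubmodule R M p B') : IsSecondarySubmodule R M p (B ⊔ B') := by
  rw [isSecondarySubmodule_iff] at hB hB' ⊢
  refine ⟨fun h => hB.1 (le_bot_iff.mp (h ▸ le_sup_left)), ?_, fun a ha => ?_⟩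
  · rw [Submodule.annihilator_sup, Ideal.radical_inf]
    exact le_inf hB.2.1 hB'.2.1
  · rw [Submodule.smul_sup', hB.2.2 a ha, hB'.2.2 a ha]

theorem IsSecondarySubmodule.finset_sup {ι : Type*} {s : Finset ι} (hs : s.Nonempty)
    {f : ι → Submodule R M} (hf : ∀ i ∈ s, IsSecondarySubmodule R M p (f i)) :
    IsSecondarySubmodule R M p (s.sup f) := by
  rw [← Finset.sup'_eq_sup hs]
  exact Finset.sup'_induction hs f (fun _ h₁ _ h₂ => h₁.sup h₂) hf

theorem SupIrred.isSecondarySubmodule [IsArtinian R M] {C : Submodule R M} (hC : SupIrred C) :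
    IsSecondarySubmodule R M C.annihilator.radical C := by
  refine ⟨hC.ne_bot, fun a ⟨n, hn⟩ => ⟨n, Submodule.mem_annihilator.mp hn⟩, fun a ha x hx => ?_⟩
  rcases exists_pow_smul_eq_zero_or_surjective hC.supIrred_top_submodule a with ⟨n, hn⟩ | hsurj
  · exact absurd ⟨n, Submodule.mem_annihilator.mpr fun y hy =>
      congrArg Subtype.val (hn ⟨y, hy⟩)⟩ ha
  · obtain ⟨y, hy⟩ := hsurj ⟨x, hx⟩
    exact ⟨y, y.2, congrArg Subtype.val hy⟩

end Secondary

section MinimalSecondaryRep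

variable {R M : Type*} [CommRing R] [AddCommGroup M] [Module R M]

theorem Submodule.annihilator_le_colon_of_subset_sup {N P : Submodule R M} {S : Set M}
    (h : S ⊆ ↑(N ⊔ P)) : P.annihilator ≤ N.colon S := fun r hr =>
  Submodule.mem_colon.mpr fun x hx => by
    obtain ⟨y, hy, z, hz, rfl⟩ := Submodule.mem_sup.mp (h hx)
    rw [smul_add, Submodule.mem_annihilator.mp hr z hz, add_zero]
    exact N.smul_mem r hy

theorem exists_eq_of_radical_colon_univ_eq {ι : Type*} [Fintype ι] {B : ι → Submodule R M}
    {p : ι → Ideal R} (hB : ∀ j, IsSecondarySubmodule R M (p j) (B j)) (htop : ⨆ j, B j = ⊤)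
    {q : Ideal R} (hq : q.IsPrime) {N : Submodule R M} (hN : (N.colon Set.univ).radical = q) :
    ∃ j, p j = q := by
  have hcolon : ⨅ j, N.colon (B j) = N.colon Set.univ := by
    rw [← Submodule.colon_iUnion, ← Submodule.colon_span, ← Submodule.iSup_eq_span, htop,
      Submodule.top_coe]
  obtain ⟨j, -, hj⟩ := (hq.inf_le' (s := Finset.univ) (f := fun j => N.colon (B j))).mp <| by
    rw [Finset.inf_univ_eq_iInf, hcolon, ← hN]
    exact Ideal.le_radical
  have hBj : ¬ B j ≤ N := fun hle =>
    hq.ne_top (top_le_iff.mp (((Submodule.colon_eq_top_iff_subset _).mpr hle).ge.trans hj))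
  refine ⟨j, le_antisymm ?_ ?_⟩
  · rw [← (hB j).radical_colon_eq hBj]
    exact hq.radical_le_iff.mpr hj
  · rw [← hN, ← (hB j).radical_colon_eq hBj]
    exact Ideal.radical_mono (Submodule.colon_mono le_rfl (Set.subset_univ _))

variable {n : ℕ} {B : Fin n → Submodule R M} {p : Fin n → Ideal R}

theorem IsMinimalSecondaryRep.sup_biSup_compl_eq_top (h : IsMinimalSecondaryRep R M B p)
    (i : Fin n) : B i ⊔ ⨆ j ∈ ({i}ᶜ : Set (Fin n)), B j = ⊤ := by
  refine top_unique (h.2.2.2.1 ▸ iSup_le fun j => ?_)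
  by_cases hj : j = i
  · exact hj ▸ le_sup_left
  · exact le_sup_of_le_right (le_biSup B hj)

theorem IsMinimalSecondaryRep.radical_colon_univ_eq (h : IsMinimalSecondaryRep R M B p)
    (i : Fin n) : ((⨆ j ∈ ({i}ᶜ : Set (Fin n)), B j).colon Set.univ).radical = p i := by
  have htop := h.sup_biSup_compl_eq_top i
  obtain ⟨-, hsec, -, -, hirr⟩ := h
  have hBi : ¬ B i ≤ ⨆ j ∈ ({i}ᶜ : Set (Fin n)), B j := fun hle =>
    hirr i (top_unique (htop.ge.trans (sup_le hle le_rfl)))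
  refine le_antisymm ?_ ?_
  · rw [← (hsec i).radical_colon_eq hBi]
    exact Ideal.radical_mono (Submodule.colon_mono le_rfl (Set.subset_univ _))
  · rw [← (hsec i).radical_annihilator_eq]
    refine Ideal.radical_mono (Submodule.annihilator_le_colon_of_subset_sup fun x _ => ?_)
    rw [sup_comm, htop]
    exact Submodule.mem_top

theorem isMinimalSecondaryRep_equivFin (Q : Finset (Ideal R)) {H : Ideal R → Submodule R M}
    (hH : ∀ q ∈ Q, IsSecondarySubmodule R M q (H q)) (htop : Q.sup H = ⊤)
    (hirr : ∀ q ∈ Q, (Q.erase q).sup H ≠ ⊤) :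
    IsMinimalSecondaryRep R M (fun k => H (Q.equivFin.symm k)) (fun k => Q.equivFin.symm k) := by
  set e := Q.equivFin.symm
  refine ⟨fun k => (hH _ (e k).2).isPrime, fun k => hH _ (e k).2,
    Subtype.val_injective.comp e.injective, ?_, fun k hk => hirr _ (e k).2 (top_unique ?_)⟩
  · rw [e.iSup_comp (g := fun q : Q => H q), iSup_subtype, ← Finset.sup_eq_iSup, htop]
  · refine hk ▸ iSup₂_le fun j hj => Finset.le_sup (Finset.mem_erase.mpr ⟨?_, (e j).2⟩)
    exact fun hjk => hj (e.injective (Subtype.val_injective hjk))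

open Classical in
theorem exists_isMinimalSecondaryRep_of_finset_sup_eq_top (S : Finset (Submodule R M))
    (hS : ∀ W ∈ S, IsSecondarySubmodule R M W.annihilator.radical W) (htop : S.sup id = ⊤) :
    ∃ (m : ℕ) (B : Fin m → Submodule R M) (p : Fin m → Ideal R), IsMinimalSecondaryRep R M B p ∧
      ∀ k, B k = (S.filter fun W => W.annihilator.radical = p k).sup id := by
  set H : Ideal R → Submodule R M := fun q => (S.filter fun W => W.annihilator.radical = q).sup id
  have hle : ∀ W ∈ S, W ≤ H W.annihilator.radical := fun W hW =>
    Finset.le_sup (f := id) (Finset.mem_filter.mpr ⟨hW, rfl⟩)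
  have hHsup : (S.image fun W => W.annihilator.radical).sup H = ⊤ := by
    rw [Finset.sup_image, ← htop]
    refine le_antisymm (Finset.sup_le fun W _ => Finset.sup_mono (Finset.filter_subset _ S))
      (Finset.sup_le fun W hW => (hle W hW).trans
        (Finset.le_sup (f := fun V : Submodule R M => H V.annihilator.radical) hW))
  obtain ⟨Q, hQS, hQtop, hQirr⟩ := Finset.exists_subset_sup_eq_forall_erase_sup_ne_s12 H
    (S.image fun W => W.annihilator.radical)
  rw [hHsup] at hQtop hQirr
  have hH : ∀ q ∈ Q, IsSecondarySubmodule R M q (H q) := fun q hq => by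
    obtain ⟨W, hW, rfl⟩ := Finset.mem_image.mp (hQS hq)
    have hne : (S.filter fun V => V.annihilator.radical = W.annihilator.radical).Nonempty :=
      ⟨W, Finset.mem_filter.mpr ⟨hW, rfl⟩⟩
    refine IsSecondarySubmodule.finset_sup hne fun V hV => ?_
    obtain ⟨hVS, hVW⟩ := Finset.mem_filter.mp hV
    exact hVW ▸ hS V hVS
  exact ⟨Q.card, _, _, isMinimalSecondaryRep_equivFin Q hH hQtop hQirr, fun k => rfl⟩

theorem IsMinimalSecondaryRep.le_of_isMinimalEmbeddedComponent [IsArtinian R M]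
    (h : IsMinimalSecondaryRep R M B p) {i : Fin n}
    (hi : IsMinimalEmbeddedComponent R M (p i) (B i)) {D : Submodule R M} (hD : D ≤ B i)
    (htop : D ⊔ ⨆ j ∈ ({i}ᶜ : Set (Fin n)), B j = ⊤) : B i ≤ D := by
  classical
  have hcolon := h.radical_colon_univ_eq i
  obtain ⟨hprime, hsec, hinj, -, -⟩ := h
  obtain ⟨F, hFD, hF⟩ := exists_supIrred_decomposition D
  set S := F ∪ (Finset.univ.erase i).image B
  have hS : ∀ W ∈ S, IsSecondarySubmodule R M W.annihilator.radical W := by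
    intro W hW
    rcases Finset.mem_union.mp hW with hW | hW
    · exact (hF hW).isSecondarySubmodule
    · obtain ⟨j, -, rfl⟩ := Finset.mem_image.mp hW
      exact (hsec j).radical_annihilator_eq.symm ▸ hsec j
  have hStop : S.sup id = ⊤ := by
    rw [Finset.sup_union, hFD, Finset.sup_image, ← htop]
    simp [Finset.sup_eq_iSup]
  obtain ⟨m, B', p', hrep, hB'⟩ := exists_isMinimalSecondaryRep_of_finset_sup_eq_top S hS hStop
  obtain ⟨k, hk⟩ := exists_eq_of_radical_colon_univ_eq hrep.2.1 hrep.2.2.2.1 (hprime i) hcolon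
  -- the members `B j`, `j ≠ i`, of `S` have attached prime `p j ≠ p i`
  have hB'D : B' k ≤ D := by
    rw [hB', ← hFD]
    refine Finset.sup_le fun W hW => ?_
    obtain ⟨hWS, hWp⟩ := Finset.mem_filter.mp hW
    rcases Finset.mem_union.mp hWS with hWF | hWB
    · exact Finset.le_sup (f := id) hWF
    · obtain ⟨j, hj, rfl⟩ := Finset.mem_image.mp hWB
      rw [(hsec j).radical_annihilator_eq, hk] at hWp
      exact absurd (hinj hWp) (Finset.ne_of_mem_erase hj)
  exact (hi.2 (B' k) ⟨m, B', p', hrep, k, hk, rfl⟩ (hB'D.trans hD)) ▸ hB'D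

theorem IsMinimalSecondaryRep.le_of_not_exists_lt (h : IsMinimalSecondaryRep R M B p)
    {i : Fin n} (hi : ¬ ∃ j, p j < p i) {D : Submodule R M}
    (htop : D ⊔ ⨆ j ∈ ({i}ᶜ : Set (Fin n)), B j = ⊤) : B i ≤ D := by
  classical
  obtain ⟨hprime, hsec, hinj, -, -⟩ := h
  by_contra hBD
  have hann : (Finset.univ.erase i).inf (fun j => (B j).annihilator) ≤ p i :=
    calc _ ≤ (⨆ j ∈ ({i}ᶜ : Set (Fin n)), B j).annihilator := by
          simp only [Submodule.annihilator_iSup]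
          exact le_iInf₂ fun j hj =>
            Finset.inf_le (Finset.mem_erase.mpr ⟨hj, Finset.mem_univ j⟩)
      _ ≤ D.colon (B i) := Submodule.annihilator_le_colon_of_subset_sup (htop ▸ fun _ _ => trivial)
      _ ≤ (D.colon (B i)).radical := Ideal.le_radical
      _ = p i := (hsec i).radical_colon_eq hBD
  obtain ⟨j, hj, hle⟩ := (hprime i).inf_le'.mp hann
  refine hi ⟨j, lt_of_le_of_ne ?_ (hinj.ne (Finset.ne_of_mem_erase hj))⟩
  rw [← (hsec j).radical_annihilator_eq]
  exact (hprime i).radical_le_iff.mpr hle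

theorem IsMinimalSecondaryRep.eq_of_le_of_sup_eq_top [IsArtinian R M]
    (h : IsMinimalSecondaryRep R M B p)
    (hmin : ∀ i : Fin n, (∃ j, p j < p i) → IsMinimalEmbeddedComponent R M (p i) (B i))
    {i : Fin n} {D : Submodule R M} (hD : D ≤ B i)
    (htop : D ⊔ ⨆ j ∈ ({i}ᶜ : Set (Fin n)), B j = ⊤) : D = B i := by
  refine le_antisymm hD ?_
  by_cases hemb : ∃ j, p j < p i
  · exact h.le_of_isMinimalEmbeddedComponent (hmin i hemb) hD htop
  · exact h.le_of_not_exists_lt hemb htop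

end MinimalSecondaryRep

theorem coirIndex_eq_sum_coirIndex_general (R A : Type*) [CommRing R]
    [AddCommGroup A] [Module R A] [IsArtinian R A]
    {n : ℕ} (B : Fin n → Submodule R A) (p : Fin n → Ideal R)
    (h : IsMinimalSecondaryRep R A B p)
    (hmin : ∀ i : Fin n, (∃ j, p j < p i) → IsMinimalEmbeddedComponent R A (p i) (B i)) :
    coirIndex R A = ∑ i : Fin n, coirIndex R (B i) := by
  classical
  have hsup : ⨆ j, B j = ⊤ := h.2.2.2.1
  choose S hS using fun i => exists_isIrredundantSupDecomp (B i)
  have hsep : ∀ i, ∀ C ∈ S i,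
      ((S i).erase C).sup id ⊔ ⨆ j ∈ ({i}ᶜ : Set (Fin n)), B j ≠ ⨆ j, B j := by
    intro i C hC htop
    refine (hS i).erase_sup_ne C hC (h.eq_of_le_of_sup_eq_top hmin ?_ (htop.trans hsup))
    exact (Finset.sup_mono (Finset.erase_subset C (S i))).trans (hS i).sup_eq.le
  have hT := IsIrredundantSupDecomp.biUnion hS hsep
  rw [hsup] at hT
  rw [coirIndex_eq_card hT, IsIrredundantSupDecomp.card_biUnion hS hsep]
  exact Finset.sum_congr rfl fun i _ => (coirIndex_submodule_eq_card (hS i)).symm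

/-- Let `A = B 0 + … + B (n-1)` be a minimal secondary representation of a nonzero Artinian
module `A` over a Noetherian ring, with `B i` being `p i`-secondary. If `B i` is a
`p i`-minimal embedded component of `A` for every embedded attached prime `p i`, then
`ir'_R(A) = ir'_R(B 0) + … + ir'_R(B (n-1))`. -/
theorem coirIndex_eq_sum_coirIndex (R A : Type*) [CommRing R] [IsNoetherianRing R]
    [AddCommGroup A] [Module R A] [IsArtinian R A] [Nontrivial A]
    {n : ℕ} (B : Fin n → Submodule R A) (p : Fin n → Ideal R)
    (h : IsMinimalSecondaryRep R A B p)
    (hmin : ∀ i : Fin n, (∃ j, p j < p i) → IsMinimalEmbeddedComponent R A (p i) (B i)) :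
    coirIndex R A = ∑ i : Fin n, coirIndex R (B i) :=
  coirIndex_eq_sum_coirIndex_general R A B p h hmin
end
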